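/- Let 𝓟 be a completely positive trace-preserving map on a bipartite system A⊗B that is semicausal from A to B, meaning there exists a completely positive map 𝓣 on A such that Tr_{B₂} 𝓟(ρ_{AB}) = 𝓣(Tr_B ρ_{AB}) for all states ρ_{AB}. Then for any initial state ρ_{A₁B₁}, the pseudo-density matrix R_{B₁A₂} obtained by tracing out A₁ and B₂ from the two-time PDM equals (𝓣 ⊗ id_B)(ρ_{A₁B₁}) (with tensor factors reordered), and in particular R_{B₁A₂} is positive semidefinite. -/

import Mathlib

open Matrix Kronecker ComplexOrder

/-- Partial trace over the second tensor factor. -/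
noncomputable def ptraceRight {d₁ d₂ : Type*} [Fintype d₂]
    (M : Matrix (d₁ × d₂) (d₁ × d₂) ℂ) : Matrix d₁ d₁ ℂ :=
  fun i j => ∑ k : d₂, M (i, k) (j, k)

/-- The Choi matrix of a linear map on matrices (standard convention,
`Choi((i,k),(j,l)) = 𝓜(|i⟩⟨j|) k l`). -/
noncomputable def choiStd {n : Type*} [Fintype n] [DecidableEq n]
    (𝓜 : Matrix n n ℂ →ₗ[ℂ] Matrix n n ℂ) : Matrix (n × n) (n × n) ℂ :=
  fun p q => 𝓜 (Matrix.single p.1 q.1 1) p.2 q.2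

/-- A map is completely positive iff its Choi matrix is positive semidefinite. -/
noncomputable def IsCompletelyPositive {n : Type*} [Fintype n] [DecidableEq n]
    (𝓜 : Matrix n n ℂ →ₗ[ℂ] Matrix n n ℂ) : Prop :=
  (choiStd 𝓜).PosSemidef

/-- The Choi matrix in the PDM (transposed) convention,
`M = Σᵢⱼ |i⟩⟨j|ᵀ ⊗ 𝓜(|i⟩⟨j|)`. -/
noncomputable def choiMatrix {n : Type*} [Fintype n] [DecidableEq n]
    (𝓜 : Matrix n n ℂ →ₗ[ℂ] Matrix n n ℂ) : Matrix (n × n) (n × n) ℂ :=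
  ∑ i : n, ∑ j : n, (Matrix.single i j (1 : ℂ))ᵀ ⊗ₖ 𝓜 (Matrix.single i j 1)

/-- The map `𝓣 ⊗ id_B` applied to a bipartite matrix. -/
noncomputable def tensorId {dA dB : Type*} [Fintype dA] [DecidableEq dA]
    (𝓣 : Matrix dA dA ℂ →ₗ[ℂ] Matrix dA dA ℂ)
    (ρ : Matrix (dA × dB) (dA × dB) ℂ) : Matrix (dA × dB) (dA × dB) ℂ :=
  fun p q => ∑ i : dA, ∑ i' : dA,
    𝓣 (Matrix.single i i' 1) p.1 q.1 * ρ (i, p.2) (i', q.2)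
/-!
Semicausality says that tracing out `B₂` after `𝓟` is the same as applying `𝓣` after tracing
out `B`. Entrywise, `M (ρ ⊗ 1)` and `(ρ ⊗ 1) M` are `𝓟` applied to `ρ |y⟩⟨x|` and `|y⟩⟨x| ρ`;
tracing out `B₂` therefore turns both into `𝓣` applied to a `B`-partial trace, and the remaining
trace over `A₁` reassembles the blocks `⟨j|ρ|j'⟩_B`. So both halves of `R` reduce to
`(𝓣 ⊗ id)(ρ)`, which is positive as a compression of `Choi(𝓣) ⊗ ρ`.
-/

section

variable {α n : Type*} [Semiring α] [Fintype n] [DecidableEq n]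

lemma mul_single_one_eq_sum (M : Matrix n n α) (x y : n) :
    M * single y x 1 = ∑ s, M s y • single s x 1 := by
  ext a b
  simp [Matrix.sum_apply, single_apply, mul_apply, ite_and]

lemma single_one_mul_eq_sum (M : Matrix n n α) (x y : n) :
    single y x 1 * M = ∑ s, M x s • single y s 1 := by
  ext a b
  simp [Matrix.sum_apply, single_apply, mul_apply, ite_and]

end

section

variable {n : Type*} [Fintype n] [DecidableEq n]

lemma choiMatrix_apply (𝓜 : Matrix n n ℂ →ₗ[ℂ] Matrix n n ℂ) (a b c d : n) :
    choiMatrix 𝓜 (a, b) (c, d) = 𝓜 (single c a 1) b d := by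
  simp [choiMatrix, Matrix.sum_apply, single_apply, ite_and]

lemma choiMatrix_mul_kronecker_one_apply (𝓜 : Matrix n n ℂ →ₗ[ℂ] Matrix n n ℂ)
    (ρ : Matrix n n ℂ) (x u y v : n) :
    (choiMatrix 𝓜 * (ρ ⊗ₖ (1 : Matrix n n ℂ))) (x, u) (y, v) = 𝓜 (ρ * single y x 1) u v := by
  simp only [mul_single_one_eq_sum, map_sum, map_smul, Matrix.sum_apply, Matrix.smul_apply,
    smul_eq_mul]
  simp [mul_apply, Fintype.sum_prod_type, one_apply, choiMatrix_apply, mul_comm]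

lemma kronecker_one_mul_choiMatrix_apply (𝓜 : Matrix n n ℂ →ₗ[ℂ] Matrix n n ℂ)
    (ρ : Matrix n n ℂ) (x u y v : n) :
    ((ρ ⊗ₖ (1 : Matrix n n ℂ)) * choiMatrix 𝓜) (x, u) (y, v) = 𝓜 (single y x 1 * ρ) u v := by
  simp only [single_one_mul_eq_sum, map_sum, map_smul, Matrix.sum_apply, Matrix.smul_apply,
    smul_eq_mul]
  simp [mul_apply, Fintype.sum_prod_type, one_apply, choiMatrix_apply]

end

def ptraceA₁B₂ {a₁ b₁ a₂ b₂ : Type*} [Fintype a₁] [Fintype b₂] :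
    Matrix ((a₁ × b₁) × a₂ × b₂) ((a₁ × b₁) × a₂ × b₂) ℂ →ₗ[ℂ]
      Matrix (b₁ × a₂) (b₁ × a₂) ℂ where
  toFun R := of fun p q => ∑ i, ∑ l, R ((i, p.1), (p.2, l)) ((i, q.1), (q.2, l))
  map_add' _ _ := by ext; simp [Finset.sum_add_distrib]
  map_smul' _ _ := by ext; simp [Finset.mul_sum]

@[simp]
lemma ptraceA₁B₂_apply {a₁ b₁ a₂ b₂ : Type*} [Fintype a₁] [Fintype b₂]
    (R : Matrix ((a₁ × b₁) × a₂ × b₂) ((a₁ × b₁) × a₂ × b₂) ℂ) (j k j' k') :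
    ptraceA₁B₂ R (j, k) (j', k') = ∑ i, ∑ l, R ((i, j), (k, l)) ((i, j'), (k', l)) :=
  rfl

def rightBlock {dA dB : Type*} (ρ : Matrix (dA × dB) (dA × dB) ℂ) (j j' : dB) :
    Matrix dA dA ℂ :=
  of fun a c => ρ (a, j) (c, j')

section

variable {dA dB : Type*} [Fintype dA] [DecidableEq dA]

lemma tensorId_apply (𝓣 : Matrix dA dA ℂ →ₗ[ℂ] Matrix dA dA ℂ)
    (ρ : Matrix (dA × dB) (dA × dB) ℂ) (k j k' j') :
    tensorId 𝓣 ρ (k, j) (k', j') = 𝓣 (rightBlock ρ j j') k k' := by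
  have hblock : rightBlock ρ j j' = ∑ i, ∑ i', ρ (i, j) (i', j') • single i i' 1 := by
    ext a c
    simp [rightBlock, Matrix.sum_apply, single_apply, ite_and]
  simp only [hblock, map_sum, map_smul, Matrix.sum_apply, Matrix.smul_apply, smul_eq_mul]
  simp only [tensorId, mul_comm]

variable [Fintype dB] [DecidableEq dB]

lemma sum_ptraceRight_mul_single (ρ : Matrix (dA × dB) (dA × dB) ℂ) (j j' : dB) :
    ∑ i, ptraceRight (ρ * single (i, j') (i, j) 1) = rightBlock ρ j j' := by
  ext a c
  simp [ptraceRight, rightBlock, Matrix.sum_apply, mul_apply, single_apply, ite_and]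

lemma sum_ptraceRight_single_mul (ρ : Matrix (dA × dB) (dA × dB) ℂ) (j j' : dB) :
    ∑ i, ptraceRight (single (i, j') (i, j) 1 * ρ) = rightBlock ρ j j' := by
  ext a c
  simp [ptraceRight, rightBlock, Matrix.sum_apply, mul_apply, single_apply, ite_and]

lemma posSemidef_tensorId {𝓣 : Matrix dA dA ℂ →ₗ[ℂ] Matrix dA dA ℂ}
    (h𝓣 : IsCompletelyPositive 𝓣) {ρ : Matrix (dA × dB) (dA × dB) ℂ} (hρ : ρ.PosSemidef) :
    (tensorId 𝓣 ρ).PosSemidef := by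
  -- `E |k, j⟩ = ∑ᵢ |i, k⟩ ⊗ |i, j⟩`
  let E : Matrix ((dA × dA) × dA × dB) (dA × dB) ℂ :=
    of fun p q => if p.1.1 = p.2.1 ∧ (p.1.2, p.2.2) = q then 1 else 0
  have hE : tensorId 𝓣 ρ = Eᴴ * (choiStd 𝓣 ⊗ₖ ρ) * E := by
    ext ⟨k, j⟩ ⟨k', j'⟩
    simpa [E, tensorId, choiStd, mul_apply, Fintype.sum_prod_type, apply_ite (starRingEnd ℂ),
      ite_mul, ite_and, Finset.sum_ite_irrel] using Finset.sum_comm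
  rw [hE]
  exact (PosSemidef.kronecker h𝓣 hρ).conjTranspose_mul_mul_same E

variable {𝓟 : Matrix (dA × dB) (dA × dB) ℂ →ₗ[ℂ] Matrix (dA × dB) (dA × dB) ℂ}
  {𝓣 : Matrix dA dA ℂ →ₗ[ℂ] Matrix dA dA ℂ}

lemma ptraceA₁B₂_choiMatrix_mul_kronecker_one
    (hsemi : ∀ X, ptraceRight (𝓟 X) = 𝓣 (ptraceRight X)) (ρ : Matrix (dA × dB) (dA × dB) ℂ) :
    ptraceA₁B₂ (choiMatrix 𝓟 * (ρ ⊗ₖ (1 : Matrix (dA × dB) (dA × dB) ℂ)))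
      = (tensorId 𝓣 ρ).submatrix Prod.swap Prod.swap := by
  ext ⟨j, k⟩ ⟨j', k'⟩
  have hB₂ : ∀ X, ∑ l, 𝓟 X (k, l) (k', l) = 𝓣 (ptraceRight X) k k' := fun X =>
    congrFun (congrFun (hsemi X) k) k'
  simp only [ptraceA₁B₂_apply, choiMatrix_mul_kronecker_one_apply, hB₂, submatrix_apply,
    Prod.swap_prod_mk, tensorId_apply, ← sum_ptraceRight_mul_single, map_sum, Matrix.sum_apply]

lemma ptraceA₁B₂_kronecker_one_mul_choiMatrix
    (hsemi : ∀ X, ptraceRight (𝓟 X) = 𝓣 (ptraceRight X)) (ρ : Matrix (dA × dB) (dA × dB) ℂ) :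
    ptraceA₁B₂ ((ρ ⊗ₖ (1 : Matrix (dA × dB) (dA × dB) ℂ)) * choiMatrix 𝓟)
      = (tensorId 𝓣 ρ).submatrix Prod.swap Prod.swap := by
  ext ⟨j, k⟩ ⟨j', k'⟩
  have hB₂ : ∀ X, ∑ l, 𝓟 X (k, l) (k', l) = 𝓣 (ptraceRight X) k k' := fun X =>
    congrFun (congrFun (hsemi X) k) k'
  simp only [ptraceA₁B₂_apply, kronecker_one_mul_choiMatrix_apply, hB₂, submatrix_apply,
    Prod.swap_prod_mk, tensorId_apply, ← sum_ptraceRight_single_mul, map_sum, Matrix.sum_apply]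

end

theorem semicausal_pdm_posSemidef_general {dA dB : Type*}
    [Fintype dA] [DecidableEq dA] [Fintype dB] [DecidableEq dB]
    (𝓟 : Matrix (dA × dB) (dA × dB) ℂ →ₗ[ℂ] Matrix (dA × dB) (dA × dB) ℂ)
    (𝓣 : Matrix dA dA ℂ →ₗ[ℂ] Matrix dA dA ℂ) (h𝓣cp : IsCompletelyPositive 𝓣)
    (hsemi : ∀ X : Matrix (dA × dB) (dA × dB) ℂ, ptraceRight (𝓟 X) = 𝓣 (ptraceRight X))
    (ρ : Matrix (dA × dB) (dA × dB) ℂ) (hρ : ρ.PosSemidef)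
    (R : Matrix ((dA × dB) × dA × dB) ((dA × dB) × dA × dB) ℂ)
    (hRdef : R = (2 : ℂ)⁻¹ • (choiMatrix 𝓟 * (ρ ⊗ₖ 1) + (ρ ⊗ₖ 1) * choiMatrix 𝓟))
    (RBA : Matrix (dB × dA) (dB × dA) ℂ)
    (hRBAdef : ∀ j k j' k',
      RBA (j, k) (j', k')
        = ∑ i : dA, ∑ l : dB, R ((i, j), (k, l)) ((i, j'), (k', l))) :
    (∀ j k j' k', RBA (j, k) (j', k') = tensorId 𝓣 ρ (k, j) (k', j')) ∧
      RBA.PosSemidef := by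
  have hRBA : RBA = (tensorId 𝓣 ρ).submatrix Prod.swap Prod.swap :=
    calc RBA = ptraceA₁B₂ R := by
          ext ⟨j, k⟩ ⟨j', k'⟩
          exact hRBAdef j k j' k'
      _ = (tensorId 𝓣 ρ).submatrix Prod.swap Prod.swap := by
          rw [hRdef, map_smul, map_add, ptraceA₁B₂_choiMatrix_mul_kronecker_one hsemi,
            ptraceA₁B₂_kronecker_one_mul_choiMatrix hsemi, ← two_smul ℂ, smul_smul,
            inv_mul_cancel₀ two_ne_zero, one_smul]
  exact ⟨fun j k j' k' => by rw [hRBA]; rfl, hRBA ▸ (posSemidef_tensorId h𝓣cp hρ).submatrix _⟩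

/-- **Null PDM negativity for semicausal channels.** If the CPTP map `𝓟` on `A ⊗ B` is
semicausal from `A` to `B` (no signalling from `B` to `A`), witnessed by the CP map
`𝓣` on `A` via `Tr_{B₂} 𝓟(ρ) = 𝓣(Tr_B ρ)`, then for any initial state `ρ_{A₁B₁}` the
reduced PDM `R_{B₁A₂} = Tr_{A₁B₂} R` equals `(𝓣 ⊗ id_B)(ρ_{A₁B₁})` with the two tensor
factors reordered, and in particular `R_{B₁A₂}` is positive semidefinite. -/
theorem semicausal_pdm_posSemidef {dA dB : Type*}
    [Fintype dA] [DecidableEq dA] [Fintype dB] [DecidableEq dB]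
    (𝓟 : Matrix (dA × dB) (dA × dB) ℂ →ₗ[ℂ] Matrix (dA × dB) (dA × dB) ℂ)
    (h𝓟cp : IsCompletelyPositive 𝓟) (h𝓟tp : ∀ X, (𝓟 X).trace = X.trace)
    (𝓣 : Matrix dA dA ℂ →ₗ[ℂ] Matrix dA dA ℂ) (h𝓣cp : IsCompletelyPositive 𝓣)
    (hsemi : ∀ X : Matrix (dA × dB) (dA × dB) ℂ, ptraceRight (𝓟 X) = 𝓣 (ptraceRight X))
    (ρ : Matrix (dA × dB) (dA × dB) ℂ) (hρ : ρ.PosSemidef) (hρtr : ρ.trace = 1)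
    (R : Matrix ((dA × dB) × dA × dB) ((dA × dB) × dA × dB) ℂ)
    (hRdef : R = (2 : ℂ)⁻¹ • (choiMatrix 𝓟 * (ρ ⊗ₖ 1) + (ρ ⊗ₖ 1) * choiMatrix 𝓟))
    (RBA : Matrix (dB × dA) (dB × dA) ℂ)
    (hRBAdef : ∀ j k j' k',
      RBA (j, k) (j', k')
        = ∑ i : dA, ∑ l : dB, R ((i, j), (k, l)) ((i, j'), (k', l))) :
    (∀ j k j' k', RBA (j, k) (j', k') = tensorId 𝓣 ρ (k, j) (k', j')) ∧
      RBA.PosSemidef :=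
  semicausal_pdm_posSemidef_general 𝓟 𝓣 h𝓣cp hsemi ρ hρ R hRdef RBA hRBAdef
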